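/- Let m ∈ {0,1}, ρ a single-qubit density matrix, p a probability distribution on {0,1}^{n+1}, and c uniform on {0,1}ⁿ. Then the trace distance between E_{b∼p, c∼uₙ} ⟨m, m·c| Xᵇ CNOT_{1,c} (ρ ⊗ |0ⁿ⟩⟨0ⁿ|) CNOT_{1,c}† Xᵇ |m, m·c⟩ and p(0^{n+1}) ⟨m|ρ|m⟩ is at most 2^{-n}. -/

import Mathlib

open Matrix ComplexOrder

/-- The bit-flip operator `Xᵇ` on `n+1` qubits. -/
noncomputable def pauliXb (n : ℕ) (b : Fin (n + 1) → Bool) :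
    Matrix (Fin (n + 1) → Bool) (Fin (n + 1) → Bool) ℂ :=
  Matrix.of fun i j => if i = (fun k => xor (j k) (b k)) then 1 else 0

/-- `CNOT_{1,c}`: CNOTs from qubit `1` onto qubit `i+1` exactly when `c i = 1`. -/
noncomputable def cnotC (n : ℕ) (c : Fin n → Bool) :
    Matrix (Fin (n + 1) → Bool) (Fin (n + 1) → Bool) ℂ :=
  Matrix.of fun i j =>
    if i = Fin.cons (j 0) (fun k => xor (j k.succ) (j 0 && c k)) then 1 else 0

/-- The `(n+1)`-qubit state `ρ ⊗ |0ⁿ⟩⟨0ⁿ|` for a single-qubit state `ρ`. -/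
noncomputable def rhoZeros (n : ℕ) (ρ : Matrix Bool Bool ℂ) :
    Matrix (Fin (n + 1) → Bool) (Fin (n + 1) → Bool) ℂ :=
  Matrix.of fun i j =>
    if (∀ k : Fin n, i k.succ = false) ∧ (∀ k : Fin n, j k.succ = false) then
      ρ (i 0) (j 0)
    else 0

lemma perm_mul {α : Type*} [Fintype α] [DecidableEq α] (g : α → α) (hg : Function.Involutive g)
    (M : Matrix α α ℂ) (i j : α) :
    ((Matrix.of fun i j => if i = g j then (1:ℂ) else 0) * M) i j = M (g i) j := by
  rw [Matrix.mul_apply]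
  have : ∀ k, (Matrix.of fun i j => if i = g j then (1:ℂ) else 0) i k = if k = g i then 1 else 0 := by
    intro k
    simp only [Matrix.of_apply]
    congr 1
    simp only [eq_iff_iff]
    constructor
    · intro h; rw [h, hg]
    · intro h; rw [h, hg]
  simp only [this, ite_mul, one_mul, zero_mul]
  rw [Finset.sum_ite_eq' Finset.univ (g i) (fun k => M k j)]
  simp

lemma mul_perm {α : Type*} [Fintype α] [DecidableEq α] (g : α → α) (hg : Function.Involutive g)
    (M : Matrix α α ℂ) (i j : α) :
    (M * (Matrix.of fun i j => if i = g j then (1:ℂ) else 0)ᴴ) i j = M i (g j) := by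
  rw [Matrix.mul_apply]
  have : ∀ k, ((Matrix.of fun i j => if i = g j then (1:ℂ) else 0)ᴴ : Matrix α α ℂ) k j
      = if k = g j then 1 else 0 := by
    intro k
    simp only [Matrix.conjTranspose_apply, Matrix.of_apply]
    rw [apply_ite star]
    simp only [star_one, star_zero]
    congr 1
    simp only [eq_iff_iff]
    constructor
    · intro h; rw [h, hg]
    · intro h; rw [h, hg]
  simp only [this, mul_ite, mul_one, mul_zero]
  rw [Finset.sum_ite_eq' Finset.univ (g j) (fun k => M i k)]
  simp

lemma gb_invol (n : ℕ) (b : Fin (n+1) → Bool) :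
    Function.Involutive (fun (i : Fin (n+1) → Bool) => fun k => xor (i k) (b k)) := by
  intro i; funext k; simp

lemma gc_invol (n : ℕ) (c : Fin n → Bool) :
    Function.Involutive (fun (x : Fin (n+1) → Bool) =>
      (Fin.cons (x 0) (fun k => xor (x k.succ) (x 0 && c k)) : Fin (n+1) → Bool)) := by
  intro j; funext i
  refine Fin.cases ?_ ?_ i
  · simp
  · intro k; simp [Bool.xor_assoc]

lemma entry_eq (n : ℕ) (m : Bool) (ρ : Matrix Bool Bool ℂ) (c : Fin n → Bool)
    (b : Fin (n+1) → Bool) :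
    (pauliXb n b * cnotC n c * rhoZeros n ρ * (cnotC n c)ᴴ * (pauliXb n b)ᴴ)
        (Fin.cons m fun k => m && c k) (Fin.cons m fun k => m && c k)
    = if b = (fun _ => false) then ρ m m
      else if b = Fin.cons true c then ρ (!m) (!m) else 0 := by
  set v : Fin (n+1) → Bool := Fin.cons m fun k => m && c k with hv
  have hX : pauliXb n b = Matrix.of fun i j =>
      if i = (fun (i : Fin (n+1) → Bool) => fun k => xor (i k) (b k)) j then (1:ℂ) else 0 := rfl
  have hC : cnotC n c = Matrix.of fun i j =>
      if i = (fun (x : Fin (n+1) → Bool) =>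
        (Fin.cons (x 0) (fun k => xor (x k.succ) (x 0 && c k)) : Fin (n+1) → Bool)) j
      then (1:ℂ) else 0 := rfl
  rw [hX, hC]
  rw [show ∀ (A B M : Matrix (Fin (n+1) → Bool) (Fin (n+1) → Bool) ℂ),
      A * B * M * Bᴴ * Aᴴ = A * (B * M * Bᴴ) * Aᴴ from by intros; noncomm_ring]
  rw [mul_perm _ (gb_invol n b), perm_mul _ (gb_invol n b),
      mul_perm _ (gc_invol n c), perm_mul _ (gc_invol n c)]
  set w : Fin (n+1) → Bool :=
    (fun (x : Fin (n+1) → Bool) =>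
      (Fin.cons (x 0) (fun k => xor (x k.succ) (x 0 && c k)) : Fin (n+1) → Bool))
      ((fun (i : Fin (n+1) → Bool) => fun k => xor (i k) (b k)) v) with hw
  have hw0 : w 0 = xor m (b 0) := by simp [hw, hv]
  have hws : ∀ k : Fin n, w k.succ = xor (xor (m && c k) (b k.succ)) (xor m (b 0) && c k) := by
    intro k; simp [hw, hv]
  have key : (∀ k : Fin n, w k.succ = false) ↔ (∀ k : Fin n, b k.succ = (b 0 && c k)) := by
    constructor
    · intro h k
      have := h k; rw [hws k] at this
      revert this; cases m <;> cases b 0 <;> cases hc : c k <;> simp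
    · intro h k
      rw [hws k, h k]; cases m <;> cases b 0 <;> cases hc : c k <;> simp
  show rhoZeros n ρ w w = _
  rw [rhoZeros]
  simp only [Matrix.of_apply, and_self]
  by_cases hb0 : b 0 = false
  · by_cases hbt : ∀ k : Fin n, b k.succ = false
    · have hb : b = fun _ => false := by
        funext i; refine Fin.cases ?_ ?_ i
        · exact hb0
        · exact hbt
      rw [if_pos hb]
      have hcond : ∀ k : Fin n, w k.succ = false := by
        rw [key]; intro k; rw [hbt k, hb0]; simp
      rw [if_pos hcond, hw0, hb0]
      simp
    · have hb : ¬ (b = fun _ => false) := by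
        intro h; exact hbt fun k => by rw [h]
      have hb' : ¬ (b = Fin.cons true c) := by
        intro h; rw [h] at hb0; simp at hb0
      rw [if_neg hb, if_neg hb']
      have : ¬ (∀ k : Fin n, w k.succ = false) := by
        rw [key]; intro h
        exact hbt fun k => by rw [h k, hb0]; simp
      rw [if_neg (by tauto)]
  · have hb0' : b 0 = true := by revert hb0; cases b 0 <;> simp
    have hb : ¬ (b = fun _ => false) := by
      intro h; rw [h] at hb0'; simp at hb0'
    rw [if_neg hb]
    by_cases hbt : ∀ k : Fin n, b k.succ = c k
    · have hbc : b = Fin.cons true c := by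
        funext i; refine Fin.cases ?_ ?_ i
        · exact hb0'
        · intro k; simp [hbt k]
      rw [if_pos hbc]
      have hcond : ∀ k : Fin n, w k.succ = false := by
        rw [key]; intro k; rw [hbt k, hb0']; simp
      rw [if_pos hcond, hw0, hb0']
      simp
    · have hb' : ¬ (b = Fin.cons true c) := by
        intro h; exact hbt fun k => by rw [h]; simp
      rw [if_neg hb']
      have : ¬ (∀ k : Fin n, w k.succ = false) := by
        rw [key]; intro h
        exact hbt fun k => by rw [h k, hb0']; simp
      rw [if_neg (by tauto)]

lemma innerSumB (n : ℕ) (m : Bool) (ρ : Matrix Bool Bool ℂ) (c : Fin n → Bool)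
    (p : (Fin (n + 1) → Bool) → ℝ) :
    ∑ b : Fin (n + 1) → Bool, (p b : ℂ) *
      (pauliXb n b * cnotC n c * rhoZeros n ρ * (cnotC n c)ᴴ * (pauliXb n b)ᴴ)
        (Fin.cons m fun k => m && c k) (Fin.cons m fun k => m && c k)
    = (p (fun _ => false) : ℂ) * ρ m m + (p (Fin.cons true c) : ℂ) * ρ (!m) (!m) := by
  have hne : (fun (_ : Fin (n+1)) => false) ≠ Fin.cons true c := by
    intro h
    have := congrFun h 0
    simp at this
  have step : ∀ b : Fin (n+1) → Bool, (p b : ℂ) *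
      (pauliXb n b * cnotC n c * rhoZeros n ρ * (cnotC n c)ᴴ * (pauliXb n b)ᴴ)
        (Fin.cons m fun k => m && c k) (Fin.cons m fun k => m && c k)
    = (if b = (fun _ => false) then (p (fun _ => false) : ℂ) * ρ m m else 0)
      + (if b = Fin.cons true c then (p (Fin.cons true c) : ℂ) * ρ (!m) (!m) else 0) := by
    intro b
    rw [entry_eq]
    by_cases h1 : b = fun _ => false
    · subst h1; rw [if_pos rfl, if_pos rfl, if_neg hne]; ring
    · rw [if_neg h1, if_neg h1]
      by_cases h2 : b = Fin.cons true c
      · subst h2; rw [if_pos rfl, if_pos rfl]; ring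
      · rw [if_neg h2, if_neg h2]; ring
  rw [Finset.sum_congr rfl fun b _ => step b, Finset.sum_add_distrib,
    Finset.sum_ite_eq' Finset.univ, Finset.sum_ite_eq' Finset.univ]
  simp

/-- For `m ∈ {0,1}`, a single-qubit density matrix `ρ`, a probability distribution `p` on
`{0,1}^{n+1}` and `c` uniform on `{0,1}ⁿ`, the distance between
`E_{b∼p, c} ⟨m, m·c| Xᵇ CNOT_{1,c} (ρ ⊗ |0ⁿ⟩⟨0ⁿ|) CNOT_{1,c}† Xᵇ |m, m·c⟩`
and `p(0^{n+1}) ⟨m|ρ|m⟩` is at most `2^{-n}`. -/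
theorem stmt15 (n : ℕ) (m : Bool) (ρ : Matrix Bool Bool ℂ)
    (hρ : ρ.PosSemidef) (htr : ρ.trace = 1)
    (p : (Fin (n + 1) → Bool) → ℝ) (hp : ∀ b, 0 ≤ p b) (hp1 : ∑ b, p b = 1) :
    ‖(((2 : ℂ) ^ n)⁻¹ *
        ∑ c : Fin n → Bool, ∑ b : Fin (n + 1) → Bool, (p b : ℂ) *
          (pauliXb n b * cnotC n c * rhoZeros n ρ * (cnotC n c)ᴴ * (pauliXb n b)ᴴ)
            (Fin.cons m fun k => m && c k) (Fin.cons m fun k => m && c k)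
        - (p (fun _ => false) : ℂ) * ρ m m)‖ ≤ ((2 : ℝ) ^ n)⁻¹ := by
  have hcard : (Fintype.card (Fin n → Bool)) = 2 ^ n := by simp
  have h2 : ((2:ℂ) ^ n) ≠ 0 := by positivity
  -- simplify the expression
  have hsum : ∑ c : Fin n → Bool, ∑ b : Fin (n + 1) → Bool, (p b : ℂ) *
          (pauliXb n b * cnotC n c * rhoZeros n ρ * (cnotC n c)ᴴ * (pauliXb n b)ᴴ)
            (Fin.cons m fun k => m && c k) (Fin.cons m fun k => m && c k)
      = (2:ℂ)^n * ((p (fun _ => false) : ℂ) * ρ m m)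
        + (∑ c : Fin n → Bool, (p (Fin.cons true c) : ℂ)) * ρ (!m) (!m) := by
    rw [Finset.sum_congr rfl fun c _ => innerSumB n m ρ c p, Finset.sum_add_distrib,
      Finset.sum_const, Finset.card_univ, hcard, Finset.sum_mul]
    simp [nsmul_eq_mul]
  rw [hsum]
  have hexpr : ((2 : ℂ) ^ n)⁻¹ *
      ((2:ℂ)^n * ((p (fun _ => false) : ℂ) * ρ m m)
        + (∑ c : Fin n → Bool, (p (Fin.cons true c) : ℂ)) * ρ (!m) (!m))
      - (p (fun _ => false) : ℂ) * ρ m m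
      = ((2 : ℂ) ^ n)⁻¹ * ((∑ c : Fin n → Bool, (p (Fin.cons true c) : ℂ)) * ρ (!m) (!m)) := by
    field_simp
    try ring
  rw [hexpr]
  -- bound the sum
  have hS0 : (0:ℝ) ≤ ∑ c : Fin n → Bool, p (Fin.cons true c) :=
    Finset.sum_nonneg fun c _ => hp _
  have hS1 : ∑ c : Fin n → Bool, p (Fin.cons true c) ≤ 1 := by
    have himg : ∑ c : Fin n → Bool, p (Fin.cons true c)
        = ∑ b ∈ Finset.univ.image (Fin.cons true), p b := by
      rw [Finset.sum_image (fun x _ y _ h => funext fun k => by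
        have := congrFun h k.succ; simpa using this)]
    rw [← hp1, himg]
    exact Finset.sum_le_sum_of_subset_of_nonneg (Finset.subset_univ _)
      (fun b _ _ => hp b)
  -- bound the diagonal entry
  have hdiag : ∀ d, 0 ≤ ρ d d := by
    intro d
    have := hρ.dotProduct_mulVec_nonneg (Pi.single d 1)
    simpa [dotProduct, Matrix.mulVec, Pi.single_apply, Fintype.sum_bool] using this
  have him : ∀ d, (ρ d d).im = 0 := fun d => ((Complex.nonneg_iff.mp (hdiag d)).2).symm
  have hre : ∀ d, 0 ≤ (ρ d d).re := fun d => (Complex.nonneg_iff.mp (hdiag d)).1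
  have htr' : (ρ false false).re + (ρ true true).re = 1 := by
    have : ρ.trace = ρ false false + ρ true true := by
      simp [Matrix.trace, Matrix.diag, Fintype.sum_bool, add_comm]
    rw [this] at htr
    have := congrArg Complex.re htr
    simpa using this
  have habs : ‖ρ (!m) (!m)‖ ≤ 1 := by
    have h1 : (ρ (!m) (!m)).re ≤ 1 := by
      cases m <;> simp only [Bool.not_false, Bool.not_true] <;> nlinarith [hre false, hre true]
    rw [Complex.norm_def, Complex.normSq_apply, him]
    rw [show (ρ (!m) (!m)).re * (ρ (!m) (!m)).re + 0 * 0
        = (ρ (!m) (!m)).re ^ 2 by ring]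
    rw [Real.sqrt_sq (hre _)]
    exact h1
  -- conclude
  rw [norm_mul, norm_mul, norm_inv]
  have hp2 : ‖(2:ℂ)^n‖ = (2:ℝ)^n := by
    rw [norm_pow]; simp
  rw [hp2]
  have hScast : ‖∑ c : Fin n → Bool, ((p (Fin.cons true c) : ℂ))‖ ≤ 1 := by
    rw [show (∑ c : Fin n → Bool, ((p (Fin.cons true c):ℂ)))
        = ((∑ c : Fin n → Bool, p (Fin.cons true c) : ℝ) : ℂ) by push_cast; rfl]
    rw [Complex.norm_real, Real.norm_eq_abs, abs_of_nonneg hS0]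
    exact hS1
  calc ((2:ℝ)^n)⁻¹ * (‖∑ c : Fin n → Bool, ((p (Fin.cons true c) : ℂ))‖
          * ‖ρ (!m) (!m)‖)
      ≤ ((2:ℝ)^n)⁻¹ * (1 * 1) := by
        apply mul_le_mul_of_nonneg_left _ (by positivity)
        exact mul_le_mul hScast habs (norm_nonneg _) zero_le_one
    _ = ((2:ℝ)^n)⁻¹ := by ring
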